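/- arXiv:1408.2072 — 2 statements merged into one kernel-verified Lean document; each statement's English description precedes it below -/
import Mathlib

section
/- Let ABC be a right-angled triangle with the right angle at B, and let D be a point on segment AC with |DC| ≤ (1/2)|AC|. Then the angle ∠BDA is at most 2·∠ACB. -/
open EuclideanGeometry Real

/-- Side-angle comparison: in triangle `D B C`, if `dist D C ≤ dist D B`
then the angle at `B` is at most the angle at `C`. -/
lemma aux_angle_le_angle (D B C : EuclideanSpace ℝ (Fin 2))
    (hDC : D ≠ C) (hDB : D ≠ B) (hBC : B ≠ C)
    (h : dist D C ≤ dist D B) : ∠ D B C ≤ ∠ D C B := by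
  have ha : 0 < dist D C := dist_pos.2 hDC
  have hb : 0 < dist D B := dist_pos.2 hDB
  have hc : 0 < dist C B := dist_pos.2 (Ne.symm hBC)
  have h1 := EuclideanGeometry.law_cos D B C
  have h2 := EuclideanGeometry.law_cos D C B
  have htri : dist C B ≤ dist D C + dist D B := by
    calc dist C B ≤ dist C D + dist D B := dist_triangle _ _ _
    _ = dist D C + dist D B := by rw [dist_comm C D]
  have hBC' : dist B C = dist C B := dist_comm _ _
  rw [hBC'] at h2
  have hcos : Real.cos (∠ D C B) ≤ Real.cos (∠ D B C) := by
    nlinarith [mul_pos (mul_pos ha hb) hc, sq_nonneg (dist D C + dist D B),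
      mul_nonneg (mul_nonneg (sub_nonneg.2 h) (sub_nonneg.2 htri))
        (by positivity : (0:ℝ) ≤ dist D C + dist D B + dist C B)]
  exact (Real.strictAntiOn_cos.le_iff_ge
    ⟨EuclideanGeometry.angle_nonneg _ _ _, EuclideanGeometry.angle_le_pi _ _ _⟩
    ⟨EuclideanGeometry.angle_nonneg _ _ _, EuclideanGeometry.angle_le_pi _ _ _⟩).1 hcos

/-- The midpoint of the hypotenuse is equidistant from all vertices. -/
lemma aux_dist_midpoint (A B C : EuclideanSpace ℝ (Fin 2))
    (h : ∠ A B C = π / 2) :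
    dist B (midpoint ℝ A C) = dist A C / 2 := by
  rw [EuclideanGeometry.angle] at h
  have hnorm : ‖(A - B) + (C - B)‖ = ‖(A - B) - (C - B)‖ :=
    (InnerProductGeometry.norm_add_eq_norm_sub_iff_angle_eq_pi_div_two _ _).2 h
  have hAC : (A - B) - (C - B) = A - C := by abel
  have hBM : B - midpoint ℝ A C = -((2:ℝ)⁻¹ • ((A - B) + (C - B))) := by
    rw [midpoint_eq_smul_add, invOf_eq_inv]
    module
  rw [dist_eq_norm, hBM, norm_neg, norm_smul, dist_eq_norm, hnorm, hAC]
  simp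
  ring

/-- If `∠ A B C = π/2` and `D` lies on segment `AC` with `|DC| ≤ |AC|/2`,
then `∠ B D A ≤ 2 · ∠ A C B`. -/
theorem angle_BDA_le_two_angle_ACB
    (A B C D : EuclideanSpace ℝ (Fin 2))
    (hright : ∠ A B C = π / 2)
    (hD : Wbtw ℝ A D C)
    (hdist : dist D C ≤ dist A C / 2) :
    ∠ B D A ≤ 2 * ∠ A C B := by
  by_cases hp : π ≤ 2 * ∠ A C B
  · exact le_trans (EuclideanGeometry.angle_le_pi _ _ _) hp
  push_neg at hp
  have hBC : B ≠ C := by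
    rintro rfl
    rw [EuclideanGeometry.angle_self_right] at hp
    linarith
  have hAC : A ≠ C := by
    rintro rfl
    rw [EuclideanGeometry.angle_self_left] at hp
    linarith
  by_cases hDC : D = C
  · subst hDC
    rw [EuclideanGeometry.angle_comm B D A]
    linarith [EuclideanGeometry.angle_nonneg A D B, EuclideanGeometry.angle_comm A D B]
  have hDA : D ≠ A := by
    rintro rfl
    have h0 : dist D C ≤ 0 := by linarith
    exact hAC (dist_le_zero.1 h0)
  have hSb : Sbtw ℝ A D C := ⟨hD, hDA, hDC⟩
  have hADC : ∠ A D C = π := hSb.angle₁₂₃_eq_pi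
  have hDB : D ≠ B := by
    rintro rfl
    rw [hright] at hADC
    linarith [Real.pi_pos]
  -- key distance fact : dist D C ≤ dist D B
  have hdACpos : 0 < dist A C := dist_pos.2 hAC
  obtain ⟨t, ht, rfl⟩ := hD
  set D := AffineMap.lineMap A C t with hDdef
  have hDCdist : dist D C = |1 - t| * dist A C := by
    rw [hDdef]
    have : C = AffineMap.lineMap A C (1:ℝ) := by simp
    nth_rewrite 2 [this]
    rw [dist_lineMap_lineMap, Real.dist_eq]
    congr 1
    rw [abs_sub_comm]
  have hMDdist : dist (midpoint ℝ A C) D = |1/2 - t| * dist A C := by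
    rw [hDdef, ← lineMap_one_half, dist_lineMap_lineMap, Real.dist_eq]
  have ht1 : t ≤ 1 := ht.2
  have ht2 : 1/2 ≤ t := by
    rw [hDCdist, abs_of_nonneg (by linarith)] at hdist
    nlinarith
  have hBM : dist B (midpoint ℝ A C) = dist A C / 2 := aux_dist_midpoint A B C hright
  have hkey : dist D C ≤ dist D B := by
    have htr : dist B (midpoint ℝ A C) ≤ dist B D + dist D (midpoint ℝ A C) :=
      dist_triangle _ _ _
    rw [hBM, dist_comm D (midpoint ℝ A C)] at htr
    rw [hMDdist, abs_of_nonpos (by linarith)] at htr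
    rw [hDCdist, abs_of_nonneg (by linarith), dist_comm D B]
    nlinarith
  have hmain : ∠ D B C ≤ ∠ D C B := aux_angle_le_angle D B C hDC hDB hBC hkey
  have hsum : ∠ B D C + ∠ D C B + ∠ C B D = π :=
    EuclideanGeometry.angle_add_angle_add_angle_eq_pi C hDB
  have hext : ∠ B D A + ∠ B D C = π :=
    EuclideanGeometry.angle_add_angle_eq_pi_of_angle_eq_pi B hADC
  have hray : ∠ B C D = ∠ B C A :=
    EuclideanGeometry.angle_eq_angle_of_angle_eq_pi B hSb.symm.angle₁₂₃_eq_pi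
  have hc1 : ∠ D C B = ∠ B C D := EuclideanGeometry.angle_comm _ _ _
  have hc2 : ∠ B C A = ∠ A C B := EuclideanGeometry.angle_comm _ _ _
  have hc3 : ∠ C B D = ∠ D B C := EuclideanGeometry.angle_comm _ _ _
  linarith
end

section
/- Let r_i, r_j, r_k be points in the plane with r_k strictly closer to r_i than r_j is (i.e., |r_i r_k| ≤ |r_i r_j|), and let 0 < Δ ≤ |r_i r_k|·sin θ for some θ ∈ (0, π/2). Then for any point p with |r_i p| ≤ Δ, the angle at r_j between rays toward r_i and toward p is at most θ. -/
open EuclideanGeometry Real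

lemma sin_angle_mul_norm_le (x y : EuclideanSpace ℝ (Fin 2)) :
    Real.sin (InnerProductGeometry.angle x y) * ‖x‖ ≤ ‖x - y‖ := by
  rcases eq_or_ne y 0 with hy | hy
  · simp [hy, InnerProductGeometry.angle, Real.sin_arccos]
  · have hy0 : 0 < ‖y‖ := norm_pos_iff.mpr hy
    rw [← mul_le_mul_iff_of_pos_right hy0, mul_assoc,
      InnerProductGeometry.sin_angle_mul_norm_mul_norm]
    have key : inner ℝ x x * inner ℝ y y - inner ℝ x y * inner ℝ x y ≤ (‖x - y‖ * ‖y‖) ^ 2 := by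
      have h1 : (‖x - y‖ : ℝ) ^ 2 = inner ℝ x x - 2 * inner ℝ x y + inner ℝ y y := by
        rw [← real_inner_self_eq_norm_sq]
        simp only [inner_sub_left, inner_sub_right, real_inner_comm x y]
        ring
      have h2 : (‖y‖ : ℝ) ^ 2 = inner ℝ y y := (real_inner_self_eq_norm_sq y).symm
      have h3 : (0:ℝ) ≤ (inner ℝ y y - inner ℝ x y : ℝ) ^ 2 := sq_nonneg _
      nlinarith [h3]
    calc √(inner ℝ x x * inner ℝ y y - inner ℝ x y * inner ℝ x y)
        ≤ √((‖x - y‖ * ‖y‖) ^ 2) := Real.sqrt_le_sqrt key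
      _ = ‖x - y‖ * ‖y‖ := Real.sqrt_sq (by positivity)

/-- If `|r_i r_k| ≤ |r_i r_j|`, `θ ∈ (0, π/2)` and `0 < Δ ≤ |r_i r_k|·sin θ`,
then for any point `p` with `|r_i p| ≤ Δ`, the angle at `r_j` between `r_i`
and `p` is at most `θ`. -/
theorem angle_displacement_le_theta
    (ri rj rk : EuclideanSpace ℝ (Fin 2)) (θ Δ : ℝ)
    (hk : dist ri rk ≤ dist ri rj)
    (hθ0 : 0 < θ) (hθ : θ < π / 2)
    (hΔ0 : 0 < Δ) (hΔ : Δ ≤ dist ri rk * Real.sin θ)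
    (p : EuclideanSpace ℝ (Fin 2)) (hp : dist ri p ≤ Δ) :
    ∠ ri rj p ≤ θ := by
  have hsθ : Real.sin θ < 1 := by
    have := Real.strictMonoOn_sin
      (Set.mem_Icc.mpr ⟨by linarith [Real.pi_pos], by linarith⟩)
      (Set.mem_Icc.mpr ⟨by linarith [Real.pi_pos], le_refl _⟩) hθ
    simpa using this
  have hsθ0 : 0 < Real.sin θ := Real.sin_pos_of_pos_of_lt_pi hθ0 (by linarith [Real.pi_pos])
  have hD0 : 0 < dist ri rk := by
    by_contra h
    push_neg at h
    nlinarith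
  have hDj : 0 < dist ri rj := lt_of_lt_of_le hD0 hk
  have hlt : dist ri p < dist ri rj := by
    calc dist ri p ≤ Δ := hp
      _ ≤ dist ri rk * Real.sin θ := hΔ
      _ < dist ri rk := by nlinarith
      _ ≤ dist ri rj := hk
  -- the angle is acute
  have hacute : ∠ ri rj p < π / 2 := by
    by_contra h
    push_neg at h
    have hcos : Real.cos (∠ ri rj p) ≤ 0 := by
      have := EuclideanGeometry.angle_le_pi ri rj p
      exact Real.cos_nonpos_of_pi_div_two_le_of_le h (by linarith [Real.pi_pos])
    have hlc := EuclideanGeometry.law_cos ri rj p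
    have h1 : dist ri rj ^ 2 ≤ dist ri p ^ 2 := by
      nlinarith [sq_nonneg (dist p rj), mul_nonneg (mul_nonneg (dist_nonneg : (0:ℝ) ≤ dist ri rj) (dist_nonneg : (0:ℝ) ≤ dist p rj)) (neg_nonneg.mpr hcos)]
    nlinarith [(dist_nonneg : (0:ℝ) ≤ dist ri p)]
  -- sin of the angle is at most sin θ
  have hsin : Real.sin (∠ ri rj p) * dist ri rj ≤ dist ri p := by
    have := sin_angle_mul_norm_le (ri - rj) (p - rj)
    simpa [EuclideanGeometry.angle, dist_eq_norm, vsub_eq_sub,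
      sub_sub_sub_cancel_right] using this
  have hsinle : Real.sin (∠ ri rj p) ≤ Real.sin θ := by
    have h1 : Real.sin (∠ ri rj p) * dist ri rj ≤ Real.sin θ * dist ri rj := by
      calc Real.sin (∠ ri rj p) * dist ri rj ≤ dist ri p := hsin
        _ ≤ Δ := hp
        _ ≤ dist ri rk * Real.sin θ := hΔ
        _ ≤ dist ri rj * Real.sin θ := by nlinarith
        _ = Real.sin θ * dist ri rj := mul_comm _ _
    exact le_of_mul_le_mul_right h1 hDj
  by_contra h
  push_neg at h
  have : Real.sin θ < Real.sin (∠ ri rj p) :=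
    Real.strictMonoOn_sin ⟨by linarith [Real.pi_pos], by linarith⟩
      ⟨le_trans (by linarith [Real.pi_pos]) (EuclideanGeometry.angle_nonneg ri rj p), le_of_lt hacute⟩ h
  linarith
end
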